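/- Assume n + n' is even and τ ≥ 0. Let Λ ∈ S_{n,δ} with Υ(Λ) = (μ;ν), μ = (μ_1 ≥ … ≥ μ_{m_1}), ν = (ν_1 ≥ … ≥ ν_{m_2}), and μ_1 ≥ 1, and for 0 ≤ k ≤ μ_1 represent θ_k(Λ) by the unitary-type symbol whose first row has m_2 + 1 entries and whose second row has m_2 + 1 − δ' entries. Then for each 0 ≤ k < μ_1 there are an entry α_k of the first row and an entry β_k of the second row of θ_k(Λ) such that, as multisets, the first row of θ_{k+1}(Λ) is obtained from that of θ_k(Λ) by replacing one occurrence of α_k by α_k + 2 and the second row is obtained by replacing one occurrence of β_k by β_k − 2. Moreover, all α_k have the same parity and α_0 < α_1 < … < α_{μ_1−1}; all β_k have the same parity and β_0 > β_1 > … > β_{μ_1−1}; and α_k and β_{k'} have opposite parities for all k, k'. -/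

import Mathlib

namespace PanUnitary

/-- `part μ i` : the `i`-th largest element (0-indexed) of the multiset `μ`, `0` beyond.
Viewing a multiset of naturals as a partition (identified up to trailing zeros),
this is the `(i+1)`-st part. -/
def part (μ : Multiset ℕ) (i : ℕ) : ℕ := ((μ.sort (· ≤ ·)).reverse).getD i 0

/-- Remove the zero parts: the canonical (zero-free) representative of a partition. -/
def strip (μ : Multiset ℕ) : Multiset ℕ := μ.filter (fun x => 0 < x)

/-- `transpose μ j` is the `(j+1)`-st part of the transposed (conjugate) partition. -/
def transpose (μ : Multiset ℕ) (j : ℕ) : ℕ := (μ.filter (fun x => j < x)).card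

/-- `Preceq f g` : the partition whose parts are given by `f` is `⪯` the one given by `g`,
i.e. `g i - 1 ≤ f i ≤ g i` for all `i`. -/
def Preceq (f g : ℕ → ℕ) : Prop := ∀ i, g i ≤ f i + 1 ∧ f i ≤ g i

/-- An integer `δ` is admissible if it is even and nonnegative, or odd and negative. -/
def IsAdmissible (δ : ℤ) : Prop := (Even δ ∧ 0 ≤ δ) ∨ (Odd δ ∧ δ < 0)

/-- `ε = 1` if `δ` is even, `ε = 0` if `δ` is odd. -/
def eps (δ : ℤ) : ℕ := if Even δ then 1 else 0

/-- `d (d + 1) / 2` where `d = |δ|`. -/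
def halfTri (δ : ℤ) : ℕ := δ.natAbs * (δ.natAbs + 1) / 2

/-- A symbol: a pair of rows of natural numbers (the strict-decrease condition is
part of the predicate `Symbol.IsUnitary`). -/
structure Symbol where
  A : List ℕ
  B : List ℕ

def Symbol.defect (Λ : Symbol) : ℤ := (Λ.A.length : ℤ) - (Λ.B.length : ℤ)

/-- The row `(a_1, …, a_m)` gives the partition with parts `(a_i - e)/2 - (m - i)`. -/
def upsRow (L : List ℕ) (e : ℕ) : Multiset ℕ :=
  ((L.mapIdx fun i a => (a - e) / 2 - (L.length - 1 - i) : List ℕ) : Multiset ℕ)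

/-- The bipartition `Υ(Λ)` (canonical zero-free representatives). -/
def Symbol.Upsilon (Λ : Symbol) : Multiset ℕ × Multiset ℕ :=
  (strip (upsRow Λ.A (eps Λ.defect)), strip (upsRow Λ.B (1 - eps Λ.defect)))

/-- `Λ` is a unitary-type symbol of (admissible) defect `δ`. -/
def Symbol.IsUnitary (Λ : Symbol) (δ : ℤ) : Prop :=
  Λ.A.Pairwise (· > ·) ∧ Λ.B.Pairwise (· > ·) ∧ Λ.defect = δ ∧
    (∀ a ∈ Λ.A, a % 2 = eps δ) ∧ (∀ b ∈ Λ.B, b % 2 = 1 - eps δ)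

/-- The rank `2(|μ| + |ν|) + d(d+1)/2` of a unitary-type symbol. -/
def Symbol.rank (Λ : Symbol) : ℕ :=
  2 * (Λ.Upsilon.1.sum + Λ.Upsilon.2.sum) + halfTri Λ.defect

/-- Equivalence of symbols: same defect and same `Υ`. -/
def Symbol.Equiv (Λ Λ' : Symbol) : Prop :=
  Λ.defect = Λ'.defect ∧ Λ.Upsilon = Λ'.Upsilon

/-- Membership in `S_{n,δ}`: a unitary-type symbol of admissible defect `δ` and rank `n`. -/
def InS (n : ℕ) (δ : ℤ) (Λ : Symbol) : Prop :=
  IsAdmissible δ ∧ Λ.IsUnitary δ ∧ Λ.rank = n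

/-- `Σ min(x,y)` over all unordered pairs of (positions of) entries of the list. -/
def pairMinSum : List ℕ → ℕ
  | [] => 0
  | x :: xs => (xs.map (fun y => min x y)).sum + pairMinSum xs

/-- All entries of a symbol (both rows). -/
def Symbol.entries (Λ : Symbol) : List ℕ := Λ.A ++ Λ.B

/-- `ord(Λ) = Σ min(x,y) − Σ_{i=1}^{⌊N/2⌋} (N − 2i)²`. -/
def Symbol.ord (Λ : Symbol) : ℤ :=
  (pairMinSum Λ.entries : ℤ) -
    ∑ i ∈ Finset.Icc 1 (Λ.entries.length / 2),
      ((Λ.entries.length : ℤ) - 2 * (i : ℤ)) ^ 2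

/-- The shift of a unitary-type symbol. -/
def Symbol.shift (Λ : Symbol) : Symbol :=
  ⟨Λ.A.map (fun a => a + 2) ++ [eps Λ.defect],
   Λ.B.map (fun b => b + 2) ++ [1 - eps Λ.defect]⟩

/-- The defect `δ'` for the second member of the dual pair. -/
def deltaPrime (n n' : ℕ) (δ : ℤ) : ℤ :=
  if Even (n + n') then (if δ = 0 then 0 else -δ + 1) else -δ - 1

/-- `τ = ((n' − d'(d'+1)/2) − (n − d(d+1)/2)) / 2`. -/
def tau (n n' : ℕ) (δ : ℤ) : ℚ :=
  (((n' : ℚ) - (halfTri (deltaPrime n n' δ) : ℚ)) - ((n : ℚ) - (halfTri δ : ℚ))) / 2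

/-- `τ` as a natural number (equal to `τ` whenever `τ` is a nonnegative integer). -/
def tauNat (n n' : ℕ) (δ : ℤ) : ℕ :=
  ((n' + halfTri δ) - (n + halfTri (deltaPrime n n' δ))) / 2

/-- The set of (canonical, zero-free) bipartitions `(μ;ν)` with
`2(|μ|+|ν|) + d(d+1)/2 = n`; equivalently `|μ|+|ν| = (n − d(d+1)/2)/2`. -/
def BipSet (n : ℕ) (δ : ℤ) : Set (Multiset ℕ × Multiset ℕ) :=
  {p | (∀ x ∈ p.1, 0 < x) ∧ (∀ x ∈ p.2, 0 < x) ∧ 2 * (p.1.sum + p.2.sum) + halfTri δ = n}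

/-- The `⪯`-conditions (on transposes) defining the relation `Θ`, at the level of
bipartitions `p = Υ(Λ)`, `q = Υ(Λ')`. -/
def PrecCond (n n' : ℕ) (p q : Multiset ℕ × Multiset ℕ) : Prop :=
  if Even (n + n') then
    Preceq (transpose p.2) (transpose q.1) ∧ Preceq (transpose q.2) (transpose p.1)
  else
    Preceq (transpose p.1) (transpose q.2) ∧ Preceq (transpose q.1) (transpose p.2)

/-- `Θ` at the level of bipartitions (classes of symbols). -/
def ThetaB (n n' : ℕ) (δ : ℤ) (p q : Multiset ℕ × Multiset ℕ) : Prop :=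
  q ∈ BipSet n' (deltaPrime n n' δ) ∧ PrecCond n n' p q

/-- `Λ' ∈ Θ(Λ)` for symbols, where `Λ ∈ S_{n,δ}`. -/
def InTheta (n n' : ℕ) (δ : ℤ) (Λ Λ' : Symbol) : Prop :=
  InS n' (deltaPrime n n' δ) Λ' ∧ PrecCond n n' Λ.Upsilon Λ'.Upsilon

/-- `Λ' ∈ Θ(Λ)_k`. -/
def InThetaK (n n' : ℕ) (δ : ℤ) (k : ℕ) (Λ Λ' : Symbol) : Prop :=
  InTheta n n' δ Λ Λ' ∧
    (if Even (n + n') then (Λ'.Upsilon.2.sum : ℤ) = (Λ.Upsilon.1.sum : ℤ) - (k : ℤ)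
     else (Λ'.Upsilon.1.sum : ℤ) = (Λ.Upsilon.2.sum : ℤ) - (k : ℤ))

/-- Remove (one copy of) the largest part. -/
def mtail (μ : Multiset ℕ) : Multiset ℕ := μ.erase (part μ 0)

/-- `θ_k` at the level of bipartitions:
even case: `(μ;ν) ↦ (sort(ν, τ+k); sort(μ_2, …, μ_{m_1}, μ_1 − k))`;
odd case: `(μ;ν) ↦ (sort(ν_2, …, ν_{m_2}, ν_1 − k); sort(μ, τ+k))`. -/
def thetaBip (n n' : ℕ) (δ : ℤ) (k : ℕ) (p : Multiset ℕ × Multiset ℕ) :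
    Multiset ℕ × Multiset ℕ :=
  if Even (n + n') then
    (strip ((tauNat n n' δ + k) ::ₘ p.2), strip ((part p.1 0 - k) ::ₘ mtail p.1))
  else
    (strip ((part p.2 0 - k) ::ₘ mtail p.2), strip ((tauNat n n' δ + k) ::ₘ p.1))

/-- The unitary-type symbol of defect `δ` with `Υ = p`, whose first row has `m1`
entries and second row `m2` entries (valid whenever `m1, m2` are large enough). -/
def symbolOfBip (δ : ℤ) (p : Multiset ℕ × Multiset ℕ) (m1 m2 : ℕ) : Symbol :=
  ⟨List.ofFn (fun i : Fin m1 => 2 * (part p.1 (i : ℕ) + (m1 - 1 - (i : ℕ))) + eps δ),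
   List.ofFn (fun j : Fin m2 => 2 * (part p.2 (j : ℕ) + (m2 - 1 - (j : ℕ))) + (1 - eps δ))⟩

/-- A canonical representative symbol of defect `δ` with `Υ = p`. -/
def canonicalSymbol (δ : ℤ) (p : Multiset ℕ × Multiset ℕ) : Symbol :=
  symbolOfBip δ p (max p.1.card ((p.2.card : ℤ) + δ).toNat)
    (((max p.1.card ((p.2.card : ℤ) + δ).toNat : ℤ) - δ).toNat)

/-- A symbol representing the class `θ_k(Λ)`. -/
def thetaSymbol (n n' : ℕ) (δ : ℤ) (k : ℕ) (Λ : Symbol) : Symbol :=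
  canonicalSymbol (deltaPrime n n' δ) (thetaBip n n' δ k Λ.Upsilon)

/-- `K(Λ)`: `μ_1` in the even case, `ν_1` in the odd case. -/
def bigK (n n' : ℕ) (Λ : Symbol) : ℕ :=
  if Even (n + n') then part Λ.Upsilon.1 0 else part Λ.Upsilon.2 0

/-- `ord` at the level of bipartitions (well defined on classes). -/
def ordB (δ : ℤ) (p : Multiset ℕ × Multiset ℕ) : ℤ := (canonicalSymbol δ p).ord

/-- Strict lexicographic order on partitions. -/
def PartLexLt (μ ν : Multiset ℕ) : Prop :=
  ∃ i, (∀ j < i, part μ j = part ν j) ∧ part μ i < part ν i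

/-- The total order on `S_{n,δ}` (and on `S_{n',δ'}`), at the level of bipartitions;
it depends only on the parity of `n + n'`. -/
def BLt (n n' : ℕ) (p q : Multiset ℕ × Multiset ℕ) : Prop :=
  if Even (n + n') then
    p.1.sum < q.1.sum ∨ (p.1.sum = q.1.sum ∧ PartLexLt p.1 q.1) ∨
      (p.1 = q.1 ∧ PartLexLt p.2 q.2)
  else
    p.2.sum < q.2.sum ∨ (p.2.sum = q.2.sum ∧ PartLexLt p.2 q.2) ∨
      (p.2 = q.2 ∧ PartLexLt p.1 q.1)

/-- `q ∈ Θ♭(p)` relative to a given partial function `bar` (playing the role of `θ̄`). -/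
def InFlat (n n' : ℕ) (δ : ℤ)
    (bar : Multiset ℕ × Multiset ℕ → Option (Multiset ℕ × Multiset ℕ))
    (p q : Multiset ℕ × Multiset ℕ) : Prop :=
  ThetaB n n' δ p q ∧ ∀ r ∈ BipSet n δ, BLt n n' r p → bar r ≠ some q

/-- `bar` is the partial function `θ̄` defined by recursion along the total order:
on each `p ∈ S_{n,δ}`, if `Θ♭(p) ≠ ∅` then `bar p` is defined and is the smallest
element (w.r.t. the total order) of maximal `ord` in `Θ♭(p)`. -/
def IsThetaBar (n n' : ℕ) (δ : ℤ)
    (bar : Multiset ℕ × Multiset ℕ → Option (Multiset ℕ × Multiset ℕ)) : Prop :=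
  (∀ p, p ∉ BipSet n δ → bar p = none) ∧
  ∀ p ∈ BipSet n δ,
    ((∃ q, InFlat n n' δ bar p q) → ∃ q, bar p = some q) ∧
    ∀ q, bar p = some q →
      InFlat n n' δ bar p q ∧
      (∀ r, InFlat n n' δ bar p r →
        ordB (deltaPrime n n' δ) r ≤ ordB (deltaPrime n n' δ) q) ∧
      (∀ r, InFlat n n' δ bar p r →
        ordB (deltaPrime n n' δ) r = ordB (deltaPrime n n' δ) q → r ≠ q → BLt n n' q r)


/-! The rows of a symbol built by `symbolOfBip` are `2 (λ_i + m - 1 - i) + e`, so raising one part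
`t` of `λ` to `t + 1` raises exactly one entry by `2`: the entry `2 (t + m - 1 - λ^T_t) + e` at the
position `λ^T_t` where `t` sits. The first row of `θ_k(Λ)` comes from the partition `(τ + k) ∪ ν`
and the second from `(μ_1 - k) ∪ (μ_2, …)`, so passing to `θ_{k+1}(Λ)` is such a move upwards at
`t = τ + k` in the first row and downwards at `t = μ_1 - k - 1` in the second. The moved entry is
strictly increasing in `t` because `λ^T` is antitone, which orders the `α_k` and the `β_k`. -/

lemma List.lt_getD_iff_lt_countP {l : List ℕ} (hl : l.Pairwise (· ≥ ·)) (i t : ℕ) :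
    t < l.getD i 0 ↔ i < l.countP (t < ·) := by
  induction l generalizing i with
  | nil => simp
  | cons x xs ih =>
    obtain ⟨hx, hxs⟩ := List.pairwise_cons.mp hl
    by_cases hxt : t < x
    · rw [List.countP_cons_of_pos (by simpa using hxt)]
      cases i with
      | zero => simpa using hxt
      | succ i => rw [List.getD_cons_succ, ih hxs]; omega
    · have hzero : xs.countP (t < ·) = 0 :=
        List.countP_eq_zero.mpr fun y hy hty =>
          hxt ((by simpa using hty : t < y).trans_le (hx y hy))
      rw [List.countP_cons_of_neg (by simpa using hxt), hzero]
      cases i with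
      | zero => simpa using hxt
      | succ i => rw [List.getD_cons_succ, ih hxs, hzero]; simp

/-- Conjugation of partitions: `λ_i > t ↔ λ^T_t > i` (both indices starting at `0`). -/
lemma lt_part_iff (μ : Multiset ℕ) (i t : ℕ) : t < part μ i ↔ i < transpose μ t := by
  have hsorted : ((μ.sort (· ≤ ·)).reverse).Pairwise (· ≥ ·) :=
    List.pairwise_reverse.mpr (Multiset.pairwise_sort μ (· ≤ ·))
  rw [part, List.lt_getD_iff_lt_countP hsorted, (List.reverse_perm _).countP_eq,
    ← Multiset.coe_countP, Multiset.sort_eq, Multiset.countP_eq_card_filter, transpose]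

lemma transpose_antitone (μ : Multiset ℕ) : Antitone (transpose μ) := fun _ _ hst =>
  Multiset.card_le_card (Multiset.monotone_filter_right μ fun _ hx => lt_of_le_of_lt hst hx)

lemma transpose_le_card (μ : Multiset ℕ) (t : ℕ) : transpose μ t ≤ Multiset.card μ :=
  Multiset.card_le_card (Multiset.filter_le _ _)

lemma transpose_cons (u : ℕ) (ρ : Multiset ℕ) (s : ℕ) :
    transpose (u ::ₘ ρ) s = transpose ρ s + if s < u then 1 else 0 := by
  unfold transpose
  split_ifs with h <;> simp [h]

lemma transpose_strip (μ : Multiset ℕ) : transpose (strip μ) = transpose μ := by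
  funext t
  rw [transpose, transpose, strip, Multiset.filter_filter]
  exact congrArg _ (Multiset.filter_congr fun x _ => by omega)

lemma part_strip (μ : Multiset ℕ) : part (strip μ) = part μ :=
  funext fun i => eq_of_forall_lt_iff fun t => by rw [lt_part_iff, lt_part_iff, transpose_strip]

lemma part_zero_mem {μ : Multiset ℕ} (h : 0 < part μ 0) : part μ 0 ∈ μ := by
  rw [part] at h ⊢
  cases hl : (μ.sort (· ≤ ·)).reverse with
  | nil => simp [hl] at h
  | cons x xs =>
    have hx : x ∈ (μ.sort (· ≤ ·)).reverse := hl ▸ List.mem_cons_self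
    simpa [List.mem_reverse, Multiset.mem_sort] using hx

lemma card_mtail_lt {μ : Multiset ℕ} (h : 0 < part μ 0) :
    Multiset.card (mtail μ) < Multiset.card μ :=
  Multiset.card_erase_lt_of_mem (part_zero_mem h)

lemma part_cons_eq {u i : ℕ} {ρ : Multiset ℕ} (hlo : transpose ρ u ≤ i)
    (hhi : i ≤ transpose ρ (u - 1)) : part (u ::ₘ ρ) i = u :=
  eq_of_forall_lt_iff fun s => by
    rw [lt_part_iff, transpose_cons]
    rcases lt_or_ge s u with hsu | hsu
    · have := transpose_antitone ρ (Nat.le_sub_one_of_lt hsu)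
      rw [if_pos hsu]; exact iff_of_true (by omega) hsu
    · have := transpose_antitone ρ hsu
      rw [if_neg hsu.not_gt]; exact iff_of_false (by omega) hsu.not_gt

lemma part_succ_cons (t : ℕ) (ρ : Multiset ℕ) :
    part ((t + 1) ::ₘ ρ) = Function.update (part (t ::ₘ ρ)) (transpose ρ t) (t + 1) := by
  funext i
  rcases eq_or_ne i (transpose ρ t) with rfl | hi
  · rw [Function.update_self]
    exact part_cons_eq (transpose_antitone ρ (Nat.le_add_right t 1)) le_rfl
  · rw [Function.update_of_ne hi]
    refine eq_of_forall_lt_iff fun s => ?_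
    rw [lt_part_iff, lt_part_iff, transpose_cons, transpose_cons]
    rcases lt_trichotomy s t with hst | rfl | hst
    · simp [hst, hst.trans (Nat.lt_succ_self t)]
    · simp only [lt_add_iff_pos_right, Order.lt_one_iff, ↓reduceIte, Order.lt_add_one_iff,
        lt_self_iff_false, add_zero]
      omega
    · simp [hst.not_gt, Nat.not_le.mpr hst]

def symbolRow (m e : ℕ) (ρ : Multiset ℕ) : List ℕ :=
  List.ofFn fun i : Fin m => 2 * (part ρ i + (m - 1 - i)) + e

lemma symbolOfBip_A (δ : ℤ) (p : Multiset ℕ × Multiset ℕ) (m1 m2 : ℕ) :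
    (symbolOfBip δ p m1 m2).A = symbolRow m1 (eps δ) p.1 := rfl

lemma symbolOfBip_B (δ : ℤ) (p : Multiset ℕ × Multiset ℕ) (m1 m2 : ℕ) :
    (symbolOfBip δ p m1 m2).B = symbolRow m2 (1 - eps δ) p.2 := rfl

lemma symbolRow_strip (m e : ℕ) (ρ : Multiset ℕ) :
    symbolRow m e (strip ρ) = symbolRow m e ρ := by
  rw [symbolRow, symbolRow, part_strip]

/-- The entry of `symbolRow m e (t ∪ ρ)` coming from the part `t`. -/
def risingEntry (m e : ℕ) (ρ : Multiset ℕ) (t : ℕ) : ℕ := 2 * (t + (m - 1 - transpose ρ t)) + e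

lemma symbolRow_succ_cons {m : ℕ} (e : ℕ) {ρ : Multiset ℕ} (h : Multiset.card ρ < m) (t : ℕ) :
    ∃ C : Multiset ℕ,
      (symbolRow m e (t ::ₘ ρ) : Multiset ℕ) = risingEntry m e ρ t ::ₘ C ∧
      (symbolRow m e ((t + 1) ::ₘ ρ) : Multiset ℕ) = (risingEntry m e ρ t + 2) ::ₘ C := by
  set L := symbolRow m e (t ::ₘ ρ)
  have hlen : transpose ρ t < L.length := by
    simpa [L, symbolRow] using (transpose_le_card ρ t).trans_lt h
  have hget : L[transpose ρ t] = risingEntry m e ρ t := by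
    simp [L, symbolRow, risingEntry, part_cons_eq le_rfl (transpose_antitone ρ (Nat.sub_le t 1))]
  have hset : symbolRow m e ((t + 1) ::ₘ ρ) = L.set (transpose ρ t) (risingEntry m e ρ t + 2) := by
    refine List.ext_getElem (by simp [L, symbolRow]) fun i _ _ => ?_
    rcases eq_or_ne i (transpose ρ t) with rfl | hi
    · simp only [symbolRow, part_succ_cons, List.getElem_ofFn, Function.update_self, risingEntry,
        List.getElem_set_self]
      ring
    · simp [L, symbolRow, part_succ_cons, Function.update_of_ne hi,
        List.getElem_set_ne (Ne.symm hi)]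
  refine ⟨L.eraseIdx (transpose ρ t), ?_, ?_⟩
  · rw [← hget, Multiset.cons_coe, Multiset.coe_eq_coe]
    exact (List.getElem_cons_eraseIdx_perm hlen).symm
  · rw [hset, Multiset.cons_coe, Multiset.coe_eq_coe]
    exact List.set_perm_cons_eraseIdx hlen _

/-- The move in both directions: upwards for the first row of `θ_k`, downwards for the second. -/
lemma symbolRow_succ_cons_erase {m : ℕ} (e : ℕ) {ρ : Multiset ℕ} (h : Multiset.card ρ < m)
    (t : ℕ) :
    risingEntry m e ρ t ∈ symbolRow m e (t ::ₘ ρ) ∧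
    risingEntry m e ρ t + 2 ∈ symbolRow m e ((t + 1) ::ₘ ρ) ∧
    (symbolRow m e ((t + 1) ::ₘ ρ) : Multiset ℕ)
      = (risingEntry m e ρ t + 2) ::ₘ (symbolRow m e (t ::ₘ ρ) : Multiset ℕ).erase
          (risingEntry m e ρ t) ∧
    (symbolRow m e (t ::ₘ ρ) : Multiset ℕ)
      = (risingEntry m e ρ t + 2 - 2) ::ₘ (symbolRow m e ((t + 1) ::ₘ ρ) : Multiset ℕ).erase
          (risingEntry m e ρ t + 2) := by
  obtain ⟨C, hC, hC'⟩ := symbolRow_succ_cons e h t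
  rw [← Multiset.mem_coe, ← Multiset.mem_coe, hC, hC', Multiset.erase_cons_head,
    Multiset.erase_cons_head, Nat.add_sub_cancel]
  exact ⟨Multiset.mem_cons_self _ _, Multiset.mem_cons_self _ _, rfl, rfl⟩

lemma risingEntry_strictMono {m : ℕ} (e : ℕ) {ρ : Multiset ℕ} (h : Multiset.card ρ < m) :
    StrictMono (risingEntry m e ρ) :=
  strictMono_nat_of_lt_succ fun t => by
    have := transpose_antitone ρ (Nat.le_add_right t 1)
    have := transpose_le_card ρ t
    unfold risingEntry; omega

lemma risingEntry_mod_two (m : ℕ) {e : ℕ} (he : e < 2) (ρ : Multiset ℕ) (t : ℕ) :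
    risingEntry m e ρ t % 2 = e := by
  unfold risingEntry; omega

lemma eps_lt_two (δ : ℤ) : eps δ < 2 := by
  unfold eps; split_ifs <;> omega

section EvenCase

variable {n n' : ℕ} (hpar : Even (n + n')) (δ δ' : ℤ) (k : ℕ) (p : Multiset ℕ × Multiset ℕ)
  (m1 m2 : ℕ)
include hpar

lemma symbolOfBip_thetaBip_A :
    (symbolOfBip δ' (thetaBip n n' δ k p) m1 m2).A
      = symbolRow m1 (eps δ') ((tauNat n n' δ + k) ::ₘ p.2) := by
  rw [symbolOfBip_A, thetaBip, if_pos hpar, symbolRow_strip]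

lemma symbolOfBip_thetaBip_B :
    (symbolOfBip δ' (thetaBip n n' δ k p) m1 m2).B
      = symbolRow m2 (1 - eps δ') ((part p.1 0 - k) ::ₘ mtail p.1) := by
  rw [symbolOfBip_B, thetaBip, if_pos hpar, symbolRow_strip]

end EvenCase

theorem statement7_general (n n' : ℕ) (δ : ℤ) (hpar : Even (n + n'))
    (Λ : Symbol)
    (hμ : 1 ≤ part Λ.Upsilon.1 0) (m2 : ℕ)
    (hm2 : Λ.Upsilon.2.card ≤ m2)
    (hm1 : (Λ.Upsilon.1.card : ℤ) ≤ (m2 : ℤ) + 1 - deltaPrime n n' δ)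
    (T : ℕ → Symbol)
    (hT : T = fun k => symbolOfBip (deltaPrime n n' δ) (thetaBip n n' δ k Λ.Upsilon)
      (m2 + 1) (((m2 : ℤ) + 1 - deltaPrime n n' δ).toNat)) :
    ∃ α β : ℕ → ℕ,
      (∀ k, k < part Λ.Upsilon.1 0 →
        α k ∈ (T k).A ∧ β k ∈ (T k).B ∧
        ((T (k + 1)).A : Multiset ℕ) = (α k + 2) ::ₘ (((T k).A : Multiset ℕ).erase (α k)) ∧
        ((T (k + 1)).B : Multiset ℕ) = (β k - 2) ::ₘ (((T k).B : Multiset ℕ).erase (β k))) ∧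
      (∀ k, k < part Λ.Upsilon.1 0 → ∀ k', k' < part Λ.Upsilon.1 0 → α k % 2 = α k' % 2) ∧
      (∀ k k', k < k' → k' < part Λ.Upsilon.1 0 → α k < α k') ∧
      (∀ k, k < part Λ.Upsilon.1 0 → ∀ k', k' < part Λ.Upsilon.1 0 → β k % 2 = β k' % 2) ∧
      (∀ k k', k < k' → k' < part Λ.Upsilon.1 0 → β k' < β k) ∧
      (∀ k, k < part Λ.Upsilon.1 0 → ∀ k', k' < part Λ.Upsilon.1 0 → α k % 2 ≠ β k' % 2) := by
  subst hT
  simp only [symbolOfBip_thetaBip_A hpar, symbolOfBip_thetaBip_B hpar]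
  set μ := Λ.Upsilon.1
  set ν := Λ.Upsilon.2
  set M := ((m2 : ℤ) + 1 - deltaPrime n n' δ).toNat
  set ε := eps (deltaPrime n n' δ)
  have hε : ε < 2 := eps_lt_two _
  have hν : Multiset.card ν < m2 + 1 := Nat.lt_succ_of_le hm2
  have hμM : Multiset.card (mtail μ) < M := (card_mtail_lt hμ).trans_le (by omega)
  have hα2 (k : ℕ) : risingEntry (m2 + 1) ε ν (tauNat n n' δ + k) % 2 = ε :=
    risingEntry_mod_two _ hε _ _
  have hβ2 (t : ℕ) : (risingEntry M (1 - ε) (mtail μ) t + 2) % 2 = 1 - ε := by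
    rw [Nat.add_mod_right, risingEntry_mod_two _ (by omega)]
  refine ⟨fun k => risingEntry (m2 + 1) ε ν (tauNat n n' δ + k),
    fun k => risingEntry M (1 - ε) (mtail μ) (part μ 0 - (k + 1)) + 2,
    fun k hk => ?_, fun k _ k' _ => by simp only [hα2], fun k k' hkk' _ => ?_,
    fun k _ k' _ => by simp only [hβ2], fun k k' hkk' hk' => ?_,
    fun k _ k' _ => by simp only [hα2, hβ2]; omega⟩
  · obtain ⟨hA, -, hA', -⟩ := symbolRow_succ_cons_erase ε hν (tauNat n n' δ + k)
    obtain ⟨-, hB, -, hB'⟩ := symbolRow_succ_cons_erase (1 - ε) hμM (part μ 0 - (k + 1))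
    rw [show part μ 0 - (k + 1) + 1 = part μ 0 - k by omega] at hB hB'
    exact ⟨hA, hB, hA', hB'⟩
  · exact risingEntry_strictMono ε hν (by omega)
  · have := risingEntry_strictMono (1 - ε) hμM
      (show part μ 0 - (k' + 1) < part μ 0 - (k + 1) by omega)
    dsimp only; omega

/-- The even case: from `θ_k(Λ)` to `θ_{k+1}(Λ)` (represented with first row of
`m₂ + 1` entries and second row of `m₂ + 1 − δ'` entries) a unique first-row entry
`α_k` becomes `α_k + 2` and a unique second-row entry `β_k` becomes `β_k − 2`;
the `α_k` share a parity and strictly increase, the `β_k` share a parity and strictly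
decrease, and `α`'s and `β`'s have opposite parities. -/
theorem statement7 (n n' : ℕ) (δ : ℤ) (hpar : Even (n + n'))
    (hτ : 0 ≤ tau n n' δ) (Λ : Symbol) (hΛ : InS n δ Λ)
    (hμ : 1 ≤ part Λ.Upsilon.1 0) (m2 : ℕ)
    (hm2 : Λ.Upsilon.2.card ≤ m2)
    (hm1 : (Λ.Upsilon.1.card : ℤ) ≤ (m2 : ℤ) + 1 - deltaPrime n n' δ)
    (T : ℕ → Symbol)
    (hT : T = fun k => symbolOfBip (deltaPrime n n' δ) (thetaBip n n' δ k Λ.Upsilon)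
      (m2 + 1) (((m2 : ℤ) + 1 - deltaPrime n n' δ).toNat)) :
    ∃ α β : ℕ → ℕ,
      (∀ k, k < part Λ.Upsilon.1 0 →
        α k ∈ (T k).A ∧ β k ∈ (T k).B ∧
        ((T (k + 1)).A : Multiset ℕ) = (α k + 2) ::ₘ (((T k).A : Multiset ℕ).erase (α k)) ∧
        ((T (k + 1)).B : Multiset ℕ) = (β k - 2) ::ₘ (((T k).B : Multiset ℕ).erase (β k))) ∧
      (∀ k, k < part Λ.Upsilon.1 0 → ∀ k', k' < part Λ.Upsilon.1 0 → α k % 2 = α k' % 2) ∧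
      (∀ k k', k < k' → k' < part Λ.Upsilon.1 0 → α k < α k') ∧
      (∀ k, k < part Λ.Upsilon.1 0 → ∀ k', k' < part Λ.Upsilon.1 0 → β k % 2 = β k' % 2) ∧
      (∀ k k', k < k' → k' < part Λ.Upsilon.1 0 → β k' < β k) ∧
      (∀ k, k < part Λ.Upsilon.1 0 → ∀ k', k' < part Λ.Upsilon.1 0 → α k % 2 ≠ β k' % 2) :=
  statement7_general n n' δ hpar Λ hμ m2 hm2 hm1 T hT

end PanUnitary
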